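/- arXiv:1703.07761 — 5 statements merged into one kernel-verified Lean document; each statement's English description precedes it below -/
import Mathlib

section
/- Let x ∈ Δ be a feasible point of min_{x∈Δ} f(x) that is not a stationary point, and let J(x) = {j : j ∈ argmin_{i=1,…,n} ∇_i f(x)}. Then J(x) ⊆ N(x), where N(x) = {i : x_i > ε ∇f(x)ᵀ(e_i − x)} is the nonactive-set estimate (for any ε > 0). In particular, N(x) is non-empty at every feasible non-stationary point. -/
open scoped BigOperators

noncomputable section

/-- The unit simplex in `ℝⁿ`. -/
def unitSimplex (n : ℕ) : Set (EuclideanSpace ℝ (Fin n)) :=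
  {x | (∑ i, x i) = 1 ∧ ∀ i, 0 ≤ x i}

/-- A point of the unit simplex is stationary for `min_{x ∈ Δ} f(x)` if the KKT
conditions hold. -/
def IsStationaryPt {n : ℕ} (f : EuclideanSpace ℝ (Fin n) → ℝ)
    (x : EuclideanSpace ℝ (Fin n)) : Prop :=
  x ∈ unitSimplex n ∧
    ∃ (lam : ℝ) (mu : Fin n → ℝ),
      (∀ i, gradient f x i - lam - mu i = 0) ∧
      (∑ i, mu i * x i) = 0 ∧
      (∀ i, 0 ≤ mu i)

/-- At a feasible non-stationary point `x`, the set `J(x)` of minimizers of `∇ᵢf(x)`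
is contained in the nonactive-set estimate
`N(x) = {i : xᵢ > ε ∇f(x)ᵀ(eᵢ - x)}`; in particular `N(x)` is non-empty. -/
theorem argmin_grad_subset_nonactive_estimate (n : ℕ)
    (f : EuclideanSpace ℝ (Fin n) → ℝ) (hf : ContDiff ℝ 1 f)
    (eps : ℝ) (heps : 0 < eps)
    (x : EuclideanSpace ℝ (Fin n)) (hx : x ∈ unitSimplex n)
    (hnonstat : ¬ IsStationaryPt f x) :
    {j : Fin n | ∀ i, gradient f x j ≤ gradient f x i} ⊆
      {i : Fin n | eps * ∑ j, gradient f x j * (EuclideanSpace.single i (1 : ℝ) j - x j) < x i} ∧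
    {i : Fin n | eps * ∑ j, gradient f x j * (EuclideanSpace.single i (1 : ℝ) j - x j) <
      x i}.Nonempty := by
  obtain ⟨hsum, hpos⟩ := hx
  set g : Fin n → ℝ := fun i => gradient f x i with hg
  set S : ℝ := ∑ j, g j * x j with hS
  have hkey : ∀ i : Fin n, (∑ j, g j * (EuclideanSpace.single i (1 : ℝ) j - x j)) = g i - S := by
    intro i
    have h1 : (∑ j, g j * EuclideanSpace.single i (1 : ℝ) j) = g i := by
      rw [Finset.sum_eq_single i]
      · simp [EuclideanSpace.single_apply]
      · intro b _ hb
        simp [EuclideanSpace.single_apply, hb]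
      · simp
    calc (∑ j, g j * (EuclideanSpace.single i (1 : ℝ) j - x j))
        = (∑ j, (g j * EuclideanSpace.single i (1 : ℝ) j - g j * x j)) := by
          congr 1; ext j; ring
      _ = g i - S := by rw [Finset.sum_sub_distrib, h1]
  have hsubset : {j : Fin n | ∀ i, gradient f x j ≤ gradient f x i} ⊆
      {i : Fin n | eps * ∑ j, gradient f x j * (EuclideanSpace.single i (1 : ℝ) j - x j) < x i} := by
    intro j hj
    simp only [Set.mem_setOf_eq] at hj ⊢
    rw [hkey j]
    have hjS : g j ≤ S := by
      calc g j = g j * ∑ i, x i := by rw [hsum]; ring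
        _ = ∑ i, g j * x i := by rw [Finset.mul_sum]
        _ ≤ ∑ i, g i * x i := by
            apply Finset.sum_le_sum
            intro i _
            exact mul_le_mul_of_nonneg_right (hj i) (hpos i)
    rcases lt_or_eq_of_le hjS with hlt | heq
    · have : eps * (g j - S) < 0 := mul_neg_of_pos_of_neg heps (by linarith)
      exact lt_of_lt_of_le this (hpos j)
    · exfalso
      apply hnonstat
      have hmu : ∀ i, 0 ≤ g i - S := by
        intro i
        have := hj i
        simp only [hg] at this ⊢
        linarith
      have hst : ∀ i, gradient f x i - S - (g i - S) = 0 := by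
        intro i
        simp [hg]
      refine ⟨⟨hsum, hpos⟩, S, fun i => g i - S, hst, ?_, hmu⟩
      calc (∑ i, (g i - S) * x i) = (∑ i, (g i * x i - S * x i)) := by
            congr 1; ext i; ring
        _ = S - S * ∑ i, x i := by rw [Finset.sum_sub_distrib, ← Finset.mul_sum]
        _ = 0 := by rw [hsum]; ring
  refine ⟨hsubset, ?_⟩
  have hne : (Finset.univ : Finset (Fin n)).Nonempty := by
    rcases (Finset.univ : Finset (Fin n)).eq_empty_or_nonempty with h | h
    · rw [show (∑ i, x i) = ∑ i ∈ (Finset.univ : Finset (Fin n)), x i from rfl, h,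
        Finset.sum_empty] at hsum
      norm_num at hsum
    · exact h
  obtain ⟨j, _, hj⟩ := Finset.exists_min_image Finset.univ g hne
  exact ⟨j, hsubset (fun i => hj i (Finset.mem_univ i))⟩
end
end

section
/- Assume 0 < ε ≤ 2/(nL(2C+1)) for some constant C > 0. Let x ∈ Δ be a feasible non-stationary point of min_{x∈Δ} f(x), let j ∈ N(x) ∩ J(x), let I = {1,…,n} \ {j}, and let Â(x) ⊆ A(x). Define the feasible point x̃ by x̃_i = 0 for i ∈ Â(x), x̃_i = x_i for i ∈ I \ Â(x), and x̃_j = x_j + Σ_{i∈Â(x)} x_i. Then f(x̃) − f(x) ≤ −CL‖x̃ − x‖². -/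
/-!
By the descent lemma, `f x̃ - f x ≤ ⟪∇f x, x̃ - x⟫ + L/2 ‖x̃ - x‖²`. Writing `g = ∇f x`, the step
is `⟪g, x̃ - x⟫ = ∑_{i ∈ Â} x_i (g_j - g_i)`. Since `j` minimises `g`, the weighted mean
`gᵀx` is at least `g_j`, so the active-set test `x_i ≤ ε (g_i - gᵀx)` gives
`x_i² ≤ ε x_i (g_i - g_j)`, i.e. `ε ⟪g, x̃ - x⟫ ≤ -∑_{i ∈ Â} x_i²`. On the other hand
`‖x̃ - x‖² = (∑_{Â} x_i)² + ∑_{Â} x_i² ≤ n ∑_{Â} x_i²` by Cauchy–Schwarz, and the bound on `ε`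
is exactly what turns these two estimates into `⟪g, x̃ - x⟫ ≤ -(C + 1/2) L ‖x̃ - x‖²`.
-/

open scoped BigOperators

noncomputable section

open scoped RealInnerProductSpace
open Finset Set

theorem Convex.apply_le_add_inner_gradient_add_sq {E : Type*} [NormedAddCommGroup E]
    [InnerProductSpace ℝ E] [CompleteSpace E] {f : E → ℝ} {s : Set E} {L : ℝ}
    (hs : Convex ℝ s) (hf : Differentiable ℝ f)
    (hLip : ∀ x ∈ s, ∀ y ∈ s, ‖gradient f x - gradient f y‖ ≤ L * ‖x - y‖)
    {x y : E} (hx : x ∈ s) (hy : y ∈ s) :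
    f y ≤ f x + ⟪gradient f x, y - x⟫ + L / 2 * ‖y - x‖ ^ 2 := by
  set v := y - x
  -- `φ 1 ≤ φ 0` is the claim, and the Lipschitz bound gives `φ' ≤ 0` on `[0, 1]`.
  set φ : ℝ → ℝ := fun t => f (x + t • v) - t * ⟪gradient f x, v⟫ - L / 2 * t ^ 2 * ‖v‖ ^ 2
  have hφ : ∀ t : ℝ, HasDerivAt φ
      (⟪gradient f (x + t • v), v⟫ - ⟪gradient f x, v⟫ - L * t * ‖v‖ ^ 2) t := by
    intro t
    have hline : HasDerivAt (fun t : ℝ => x + t • v) v t := by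
      simpa using ((hasDerivAt_id t).smul_const v).const_add x
    have hcomp := (hf _).hasGradientAt.hasFDerivAt.comp_hasDerivAt t hline
    rw [InnerProductSpace.toDual_apply_apply] at hcomp
    refine ((hcomp.sub ((hasDerivAt_id t).mul_const ⟪gradient f x, v⟫)).sub
      (((hasDerivAt_pow 2 t).const_mul (L / 2)).mul_const (‖v‖ ^ 2))).congr_deriv ?_
    simp only [Nat.cast_ofNat]
    ring
  have hφ_nonpos : ∀ t ∈ interior (Icc (0 : ℝ) 1),
      ⟪gradient f (x + t • v), v⟫ - ⟪gradient f x, v⟫ - L * t * ‖v‖ ^ 2 ≤ 0 := by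
    intro t ht
    rw [interior_Icc] at ht
    have hmem : x + t • v ∈ s := hs.add_smul_sub_mem hx hy ⟨ht.1.le, ht.2.le⟩
    suffices ⟪gradient f (x + t • v), v⟫ - ⟪gradient f x, v⟫ ≤ L * t * ‖v‖ ^ 2 by linarith
    calc ⟪gradient f (x + t • v), v⟫ - ⟪gradient f x, v⟫
        = ⟪gradient f (x + t • v) - gradient f x, v⟫ := (inner_sub_left _ _ _).symm
      _ ≤ ‖gradient f (x + t • v) - gradient f x‖ * ‖v‖ := real_inner_le_norm _ _
      _ ≤ L * ‖x + t • v - x‖ * ‖v‖ := by gcongr; exact hLip _ hmem _ hx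
      _ = L * t * ‖v‖ ^ 2 := by
        rw [add_sub_cancel_left, norm_smul, Real.norm_of_nonneg ht.1.le]; ring
  have hanti : AntitoneOn φ (Icc 0 1) :=
    antitoneOn_of_hasDerivWithinAt_nonpos (convex_Icc 0 1)
      (fun t _ => (hφ t).continuousAt.continuousWithinAt)
      (fun t _ => (hφ t).hasDerivWithinAt) hφ_nonpos
  have h01 := hanti (left_mem_Icc.2 zero_le_one) (right_mem_Icc.2 zero_le_one) zero_le_one
  simp only [φ, v, one_smul, zero_smul, add_zero, add_sub_cancel] at h01
  linarith

theorem convex_unitSimplex (n : ℕ) : Convex ℝ (unitSimplex n) := by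
  have h : unitSimplex n = WithLp.linearEquiv 2 ℝ (Fin n → ℝ) ⁻¹' stdSimplex ℝ (Fin n) := by
    ext x
    simp [unitSimplex, stdSimplex, and_comm]
  rw [h]
  exact (convex_stdSimplex ℝ (Fin n)).linear_preimage _

section transferMass

variable {ι : Type*} [DecidableEq ι]

/-- The point `x̃`. -/
def transferMass (x : EuclideanSpace ℝ ι) (A : Finset ι) (j : ι) : EuclideanSpace ℝ ι :=
  WithLp.toLp 2 fun i => if i = j then x j + ∑ h ∈ A, x h else if i ∈ A then 0 else x i

variable {x : EuclideanSpace ℝ ι} {A : Finset ι} {j : ι}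

theorem transferMass_sub_apply (hj : j ∉ A) (i : ι) :
    (transferMass x A j - x) i =
      (if i = j then ∑ h ∈ A, x h else 0) - if i ∈ A then x i else 0 := by
  simp only [transferMass, PiLp.sub_apply]
  by_cases hij : i = j
  · subst hij
    simp [hj]
  · by_cases hi : i ∈ A <;> simp [hij, hi]

variable [Fintype ι]

theorem sum_mul_transferMass_sub (hj : j ∉ A) (F : ι → ℝ) :
    ∑ i, F i * (transferMass x A j - x) i = ∑ i ∈ A, x i * (F j - F i) := by
  simp [transferMass_sub_apply hj, mul_sub, sub_mul, sum_sub_distrib, mul_sum, mul_comm]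

theorem inner_transferMass_sub (hj : j ∉ A) (g : EuclideanSpace ℝ ι) :
    ⟪g, transferMass x A j - x⟫ = ∑ i ∈ A, x i * (g j - g i) := by
  rw [← sum_mul_transferMass_sub hj, PiLp.inner_apply]
  simp [mul_comm]

theorem norm_transferMass_sub_sq (hj : j ∉ A) :
    ‖transferMass x A j - x‖ ^ 2 = (∑ i ∈ A, x i) ^ 2 + ∑ i ∈ A, x i ^ 2 := by
  have hdj : (transferMass x A j - x) j = ∑ i ∈ A, x i := by simp [transferMass_sub_apply hj, hj]
  have hdA : ∀ i ∈ A, (transferMass x A j - x) i = -x i := fun i hi => by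
    simp [transferMass_sub_apply hj, hi, ne_of_mem_of_not_mem hi hj]
  rw [← real_inner_self_eq_norm_sq, inner_transferMass_sub hj, hdj,
    sum_congr rfl fun i hi => by rw [hdA i hi]]
  simp only [sub_neg_eq_add, mul_add, sum_add_distrib, ← sum_mul, sq]

theorem norm_transferMass_sub_sq_le (hj : j ∉ A) :
    ‖transferMass x A j - x‖ ^ 2 ≤ Fintype.card ι * ∑ i ∈ A, x i ^ 2 := by
  have hcard : (#A + 1 : ℝ) ≤ Fintype.card ι := by
    exact_mod_cast (card_insert_of_notMem hj).symm.trans_le (card_le_univ _)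
  rw [norm_transferMass_sub_sq hj]
  have := sq_sum_le_card_mul_sum_sq (s := A) (f := fun i => x i)
  nlinarith [sum_nonneg fun i (_ : i ∈ A) => sq_nonneg (x i)]

theorem sum_mul_single_sub (g x : EuclideanSpace ℝ ι) (i : ι) :
    ∑ l, g l * (EuclideanSpace.single i (1 : ℝ) l - x l) = g i - ∑ l, g l * x l := by
  simp [mul_sub, sum_sub_distrib, PiLp.single_apply]

end transferMass

section unitSimplex

variable {n : ℕ} {x : EuclideanSpace ℝ (Fin n)}

theorem le_sum_mul_of_mem_unitSimplex (hx : x ∈ unitSimplex n) {g : Fin n → ℝ} {c : ℝ}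
    (hc : ∀ i, c ≤ g i) : c ≤ ∑ i, g i * x i :=
  calc c = ∑ i, c * x i := by rw [← mul_sum, hx.1, mul_one]
    _ ≤ ∑ i, g i * x i := sum_le_sum fun i _ => mul_le_mul_of_nonneg_right (hc i) (hx.2 i)

variable {A : Finset (Fin n)} {j : Fin n}

theorem transferMass_mem_unitSimplex (hx : x ∈ unitSimplex n) (hj : j ∉ A) :
    transferMass x A j ∈ unitSimplex n := by
  refine ⟨?_, fun i => ?_⟩
  · have h := sum_mul_transferMass_sub (x := x) hj fun _ => 1
    simp only [one_mul, sub_self, mul_zero, sum_const_zero, PiLp.sub_apply, sum_sub_distrib] at h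
    linarith [hx.1]
  · simp only [transferMass]
    split_ifs
    · exact add_nonneg (hx.2 j) (sum_nonneg fun h _ => hx.2 h)
    · exact le_rfl
    · exact hx.2 i

theorem mul_inner_transferMass_sub_le {g : EuclideanSpace ℝ (Fin n)} {eps : ℝ}
    (hx : x ∈ unitSimplex n) (heps : 0 ≤ eps) (hj : j ∉ A) (hjJ : ∀ i, g j ≤ g i)
    (hA : ∀ i ∈ A, x i ≤ eps * (g i - ∑ l, g l * x l)) :
    eps * ⟪g, transferMass x A j - x⟫ ≤ -∑ i ∈ A, x i ^ 2 := by
  have hmean : g j ≤ ∑ l, g l * x l := le_sum_mul_of_mem_unitSimplex hx hjJ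
  rw [inner_transferMass_sub hj, mul_sum, ← sum_neg_distrib]
  refine sum_le_sum fun i hi => ?_
  have hxi : x i ≤ eps * (g i - g j) := (hA i hi).trans (by gcongr)
  nlinarith [mul_le_mul_of_nonneg_left hxi (hx.2 i)]

end unitSimplex

theorem active_set_decrease_general (n : ℕ) (f : EuclideanSpace ℝ (Fin n) → ℝ)
    (hf : ContDiff ℝ 1 f) (L C eps : ℝ) (hL : 0 < L) (hC : 0 < C)
    (hLip : ∀ x ∈ unitSimplex n, ∀ y ∈ unitSimplex n,
      ‖gradient f x - gradient f y‖ ≤ L * ‖x - y‖)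
    (heps : 0 < eps) (heps' : eps ≤ 2 / (n * L * (2 * C + 1)))
    (x : EuclideanSpace ℝ (Fin n)) (hx : x ∈ unitSimplex n)
    (j : Fin n)
    -- `j ∈ N(x)`:
    (hjN : eps * ∑ i, gradient f x i * (EuclideanSpace.single j (1 : ℝ) i - x i) < x j)
    -- `j ∈ J(x)`:
    (hjJ : ∀ i, gradient f x j ≤ gradient f x i)
    (Ahat : Finset (Fin n))
    -- `Â(x) ⊆ A(x)`:
    (hAhat : ∀ i ∈ Ahat,
      x i ≤ eps * ∑ l, gradient f x l * (EuclideanSpace.single i (1 : ℝ) l - x l))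
    (xt : EuclideanSpace ℝ (Fin n))
    (hxt : xt = fun i => if i = j then x j + ∑ h ∈ Ahat, x h
      else if i ∈ Ahat then 0 else x i) :
    f xt - f x ≤ -(C * L) * ‖xt - x‖ ^ 2 := by
  obtain rfl : xt = transferMass x Ahat j := WithLp.ofLp_injective 2 hxt
  have hj : j ∉ Ahat := fun hj => (hjN.trans_le (hAhat j hj)).false
  set d := transferMass x Ahat j - x
  set Q := ∑ i ∈ Ahat, x i ^ 2
  have hdesc := (convex_unitSimplex n).apply_le_add_inner_gradient_add_sq
    (hf.differentiable one_ne_zero) hLip hx (transferMass_mem_unitSimplex hx hj)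
  have hdec : eps * ⟪gradient f x, d⟫ ≤ -Q := mul_inner_transferMass_sub_le hx heps.le hj hjJ
    fun i hi => by simpa only [sum_mul_single_sub] using hAhat i hi
  have hnorm : ‖d‖ ^ 2 ≤ n * Q := by simpa using norm_transferMass_sub_sq_le (x := x) hj
  have hn : (0 : ℝ) < n := Nat.cast_pos.2 j.pos
  have hepsn : eps * (n * L * (2 * C + 1)) ≤ 2 := (le_div_iff₀ (by positivity)).1 heps'
  have hQ : eps * (C * L + L / 2) * ‖d‖ ^ 2 ≤ Q := calc
    _ ≤ eps * (C * L + L / 2) * (n * Q) := by gcongr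
    _ = eps * (n * L * (2 * C + 1)) / 2 * Q := by ring
    _ ≤ Q := mul_le_of_le_one_left (sum_nonneg fun i _ => sq_nonneg _) (by linarith)
  have hinner : ⟪gradient f x, d⟫ ≤ -(C * L + L / 2) * ‖d‖ ^ 2 :=
    le_of_mul_le_mul_left (by linarith) heps
  linarith

/-- Sufficient decrease obtained by setting the estimated active variables to zero and
transferring their mass onto a variable `j ∈ N(x) ∩ J(x)`:
`f(x̃) - f(x) ≤ -C L ‖x̃ - x‖²`, provided `0 < ε ≤ 2 / (n L (2C + 1))`. -/
theorem active_set_decrease (n : ℕ) (f : EuclideanSpace ℝ (Fin n) → ℝ)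
    (hf : ContDiff ℝ 1 f) (L C eps : ℝ) (hL : 0 < L) (hC : 0 < C)
    (hLip : ∀ x ∈ unitSimplex n, ∀ y ∈ unitSimplex n,
      ‖gradient f x - gradient f y‖ ≤ L * ‖x - y‖)
    (heps : 0 < eps) (heps' : eps ≤ 2 / (n * L * (2 * C + 1)))
    (x : EuclideanSpace ℝ (Fin n)) (hx : x ∈ unitSimplex n)
    (hnonstat : ¬ IsStationaryPt f x)
    (j : Fin n)
    -- `j ∈ N(x)`:
    (hjN : eps * ∑ i, gradient f x i * (EuclideanSpace.single j (1 : ℝ) i - x i) < x j)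
    -- `j ∈ J(x)`:
    (hjJ : ∀ i, gradient f x j ≤ gradient f x i)
    (Ahat : Finset (Fin n))
    -- `Â(x) ⊆ A(x)`:
    (hAhat : ∀ i ∈ Ahat,
      x i ≤ eps * ∑ l, gradient f x l * (EuclideanSpace.single i (1 : ℝ) l - x l))
    (xt : EuclideanSpace ℝ (Fin n))
    (hxt : xt = fun i => if i = j then x j + ∑ h ∈ Ahat, x h
      else if i ∈ Ahat then 0 else x i) :
    f xt - f x ≤ -(C * L) * ‖xt - x‖ ^ 2 :=
  active_set_decrease_general n f hf L C eps hL hC hLip heps heps' x hx j hjN hjJ Ahat hAhat xt hxt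
end
end

section
/- Assume 0 < ε ≤ 2/(nL(2C+1)) for some constant C > 0. Let x ∈ Δ be a feasible non-stationary point, j ∈ N(x) ∩ J(x), Â(x) ⊆ A(x), and let x̃ be obtained from x by setting x̃_i = 0 for i ∈ Â(x), x̃_i = x_i for i ∉ Â(x) ∪ {j}, and x̃_j = x_j + Σ_{i∈Â(x)} x_i. Then ∇f(x)ᵀ(x̃ − x) + (L(2C+1)/2)‖x̃ − x‖² ≤ 0. -/
open scoped BigOperators

noncomputable section

/-- The key inequality behind the sufficient-decrease property:
`∇f(x)ᵀ(x̃ - x) + (L(2C+1)/2)‖x̃ - x‖² ≤ 0`, provided `0 < ε ≤ 2/(n L (2C+1))`. -/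
theorem active_set_key_inequality (n : ℕ) (f : EuclideanSpace ℝ (Fin n) → ℝ)
    (hf : ContDiff ℝ 1 f) (L C eps : ℝ) (hL : 0 < L) (hC : 0 < C)
    (hLip : ∀ x ∈ unitSimplex n, ∀ y ∈ unitSimplex n,
      ‖gradient f x - gradient f y‖ ≤ L * ‖x - y‖)
    (heps : 0 < eps) (heps' : eps ≤ 2 / (n * L * (2 * C + 1)))
    (x : EuclideanSpace ℝ (Fin n)) (hx : x ∈ unitSimplex n)
    (hnonstat : ¬ IsStationaryPt f x)
    (j : Fin n)
    -- `j ∈ N(x)`: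
    (hjN : eps * ∑ i, gradient f x i * (EuclideanSpace.single j (1 : ℝ) i - x i) < x j)
    -- `j ∈ J(x)`:
    (hjJ : ∀ i, gradient f x j ≤ gradient f x i)
    (Ahat : Finset (Fin n))
    -- `Â(x) ⊆ A(x)`:
    (hAhat : ∀ i ∈ Ahat,
      x i ≤ eps * ∑ l, gradient f x l * (EuclideanSpace.single i (1 : ℝ) l - x l))
    (xt : EuclideanSpace ℝ (Fin n))
    (hxt : xt = fun i => if i = j then x j + ∑ h ∈ Ahat, x h
      else if i ∈ Ahat then 0 else x i) :
    (∑ i, gradient f x i * (xt i - x i)) + L * (2 * C + 1) / 2 * ‖xt - x‖ ^ 2 ≤ 0 := by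

  classical
  have hn : 0 < n := by
    rcases Nat.eq_zero_or_pos n with h | h
    · exfalso; have h1 := hx.1; subst h; simp at h1
    · exact h
  set g := gradient f x with hg
  have hxsum : (∑ i, x i) = 1 := hx.1
  have hxpos : ∀ i, 0 ≤ x i := hx.2
  have hexpr : ∀ i : Fin n, (∑ l, g l * (EuclideanSpace.single i (1:ℝ) l - x l))
      = g i - ∑ l, g l * x l := by
    intro i
    have : (∑ l, g l * (EuclideanSpace.single i (1:ℝ) l - x l))
        = (∑ l, g l * EuclideanSpace.single i (1:ℝ) l) - ∑ l, g l * x l := by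
      rw [← Finset.sum_sub_distrib]; apply Finset.sum_congr rfl; intros; ring
    rw [this]
    congr 1
    simp [EuclideanSpace.single_apply, mul_ite, Finset.sum_ite_eq]
  simp only [hexpr] at hjN hAhat
  have hgx : g j ≤ ∑ l, g l * x l := by
    calc g j = ∑ l, g j * x l := by rw [← Finset.mul_sum, hxsum, mul_one]
    _ ≤ ∑ l, g l * x l :=
      Finset.sum_le_sum fun l _ => mul_le_mul_of_nonneg_right (hjJ l) (hxpos l)
  have hkey : ∀ i ∈ Ahat, x i ≤ eps * (g i - g j) := fun i hi =>
    (hAhat i hi).trans (mul_le_mul_of_nonneg_left (by linarith) heps.le)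
  have hjA : j ∉ Ahat := fun h => absurd (hAhat j h) (not_le.mpr hjN)
  set D : ℝ := ∑ h ∈ Ahat, x h with hD
  have hsum : ∀ F : Fin n → ℝ, (∀ i, i ≠ j → i ∉ Ahat → F i = 0) →
      ∑ i, F i = F j + ∑ i ∈ Ahat, F i := by
    intro F hF
    rw [← Finset.add_sum_erase _ F (Finset.mem_univ j)]
    congr 1
    symm
    apply Finset.sum_subset
    · intro i hi
      exact Finset.mem_erase.mpr ⟨fun h => hjA (h ▸ hi), Finset.mem_univ i⟩
    · intro i hi hni; exact hF i (Finset.mem_erase.mp hi).1 hni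
  have hxtj : xt j = x j + D := by rw [hxt]; simp
  have hxtA : ∀ i ∈ Ahat, xt i = 0 := by
    intro i hi
    rw [hxt]
    have : i ≠ j := fun h => hjA (h ▸ hi)
    simp [this, hi]
  have hxtO : ∀ i, i ≠ j → i ∉ Ahat → xt i = x i := by
    intro i h1 h2; rw [hxt]; simp [h1, h2]
  have h1 : (∑ i, g i * (xt i - x i)) = g j * D - ∑ i ∈ Ahat, g i * x i := by
    rw [hsum (fun i => g i * (xt i - x i))
      (fun i hi1 hi2 => by show g i * (xt i - x i) = 0; rw [hxtO i hi1 hi2]; ring), hxtj]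
    have : ∑ i ∈ Ahat, g i * (xt i - x i) = ∑ i ∈ Ahat, -(g i * x i) :=
      Finset.sum_congr rfl fun i hi => by rw [hxtA i hi]; ring
    rw [this, Finset.sum_neg_distrib]
    ring
  set Q : ℝ := ∑ i ∈ Ahat, (x i) ^ 2 with hQ
  have hnorm : ‖xt - x‖ ^ 2 = D ^ 2 + Q := by
    have : ‖xt - x‖ ^ 2 = ∑ i, (xt i - x i) ^ 2 := by
      rw [EuclideanSpace.norm_eq, Real.sq_sqrt (by positivity)]
      apply Finset.sum_congr rfl
      intro i _
      rw [show (xt - x) i = xt i - x i from rfl, Real.norm_eq_abs, sq_abs]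
    rw [this, hsum (fun i => (xt i - x i) ^ 2)
      (fun i hi1 hi2 => by show (xt i - x i) ^ 2 = 0; rw [hxtO i hi1 hi2]; ring), hxtj]
    congr 1
    · ring
    · exact Finset.sum_congr rfl fun i hi => by rw [hxtA i hi]; ring
  set T : ℝ := ∑ i ∈ Ahat, (g i - g j) * x i with hT
  have hT0 : 0 ≤ T :=
    Finset.sum_nonneg fun i _ => mul_nonneg (by linarith [hjJ i]) (hxpos i)
  have hQ0 : 0 ≤ Q := Finset.sum_nonneg fun i _ => sq_nonneg _
  have hQT : Q ≤ eps * T := by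
    rw [hT, Finset.mul_sum]
    apply Finset.sum_le_sum
    intro i hi
    have := mul_le_mul_of_nonneg_right (hkey i hi) (hxpos i)
    calc (x i) ^ 2 = x i * x i := sq (x i)
      _ ≤ eps * (g i - g j) * x i := this
      _ = eps * ((g i - g j) * x i) := by ring
  have hD2 : D ^ 2 ≤ (Ahat.card : ℝ) * Q := by
    have := sq_sum_le_card_mul_sum_sq (s := Ahat) (f := x)
    exact_mod_cast this
  have hcard : (Ahat.card : ℝ) + 1 ≤ n := by
    have h1 : Ahat ⊆ Finset.univ.erase j := fun i hi =>
      Finset.mem_erase.mpr ⟨fun h => hjA (h ▸ hi), Finset.mem_univ i⟩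
    have h2 : Ahat.card ≤ n - 1 := by
      have := Finset.card_le_card h1
      simpa [Finset.card_erase_of_mem] using this
    have h3 : Ahat.card + 1 ≤ n := by omega
    exact_mod_cast h3
  have hgD : g j * D - ∑ i ∈ Ahat, g i * x i = -T := by
    rw [hT, hD, Finset.mul_sum, ← Finset.sum_sub_distrib, ← Finset.sum_neg_distrib]
    apply Finset.sum_congr rfl
    intros; ring
  rw [h1, hnorm, hgD]
  -- now: -T + L*(2C+1)/2 * (D^2 + Q) ≤ 0
  have hKne : (n : ℝ) * L * (2 * C + 1) * eps ≤ 2 := by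
    have hpos : (0:ℝ) < (n : ℝ) * L * (2 * C + 1) := by positivity
    rw [div_eq_mul_inv] at heps'
    calc (n : ℝ) * L * (2 * C + 1) * eps ≤ (n : ℝ) * L * (2 * C + 1) * (2 * ((n : ℝ) * L * (2 * C + 1))⁻¹) :=
      mul_le_mul_of_nonneg_left heps' hpos.le
    _ = 2 := by field_simp
  have hDQ : D ^ 2 + Q ≤ (n : ℝ) * (eps * T) := by
    have : D ^ 2 + Q ≤ ((Ahat.card : ℝ) + 1) * Q := by nlinarith
    calc D ^ 2 + Q ≤ ((Ahat.card : ℝ) + 1) * Q := this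
      _ ≤ (n : ℝ) * Q := mul_le_mul_of_nonneg_right hcard hQ0
      _ ≤ (n : ℝ) * (eps * T) := mul_le_mul_of_nonneg_left hQT (by positivity)
  nlinarith [mul_le_mul_of_nonneg_left hDQ (by positivity : (0:ℝ) ≤ L * (2*C+1)/2),
    sq_nonneg D, mul_nonneg heps.le hT0]
end
end

section
/- Let x ∈ Δ be a feasible non-stationary point, let j ∈ J(x), Â(x) ⊆ A(x), let Â⁺ = Â(x) ∩ {i : x_i > 0}, and let x̃ be obtained from x by setting x̃_i = 0 for i ∈ Â(x), x̃_i = x_i for i ∉ Â(x) ∪ {j}, and x̃_j = x_j + Σ_{i∈Â(x)} x_i. Then ‖x̃ − x‖² ≤ ε(|Â⁺| + 1) · Σ_{i∈Â⁺} x_i (∇_i f(x) − ∇_j f(x)), where ε > 0 is the parameter in the active-set estimate. -/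
open scoped BigOperators

noncomputable section

/-- Bound on the squared distance between `x` and the point `x̃` obtained by zeroing the
estimated active variables:
`‖x̃ - x‖² ≤ ε (|Â⁺| + 1) Σ_{i ∈ Â⁺} xᵢ (∇ᵢ f(x) - ∇ⱼ f(x))`. -/
theorem active_set_distance_bound (n : ℕ) (f : EuclideanSpace ℝ (Fin n) → ℝ)
    (hf : ContDiff ℝ 1 f) (eps : ℝ) (heps : 0 < eps)
    (x : EuclideanSpace ℝ (Fin n)) (hx : x ∈ unitSimplex n)
    (hnonstat : ¬ IsStationaryPt f x)
    (j : Fin n)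
    -- `j ∈ J(x)`:
    (hjJ : ∀ i, gradient f x j ≤ gradient f x i)
    (Ahat : Finset (Fin n))
    -- `Â(x) ⊆ A(x)`:
    (hAhat : ∀ i ∈ Ahat,
      x i ≤ eps * ∑ l, gradient f x l * (EuclideanSpace.single i (1 : ℝ) l - x l))
    (Aplus : Finset (Fin n)) (hAplus : Aplus = Ahat.filter (fun i => 0 < x i))
    (xt : EuclideanSpace ℝ (Fin n))
    (hxt : xt = fun i => if i = j then x j + ∑ h ∈ Ahat, x h
      else if i ∈ Ahat then 0 else x i) :
    ‖xt - x‖ ^ 2 ≤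
      eps * (Aplus.card + 1) * ∑ i ∈ Aplus, x i * (gradient f x i - gradient f x j) := by
  set g : EuclideanSpace ℝ (Fin n) := gradient f x with hg
  obtain ⟨hsum, hpos⟩ := hx
  have hzero : ∀ h ∈ Ahat, h ∉ Aplus → x h = 0 := by
    intro h hh hnot
    rw [hAplus, Finset.mem_filter] at hnot
    push_neg at hnot
    exact le_antisymm (hnot hh) (hpos h)
  have hkey : ∀ i ∈ Ahat, x i ≤ eps * (g i - g j) := by
    intro i hi
    have h1 := hAhat i hi
    have h2 : ∑ l, g l * (EuclideanSpace.single i (1:ℝ) l - x l)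
        = g i - ∑ l, g l * x l := by
      simp [mul_sub, Finset.sum_sub_distrib, EuclideanSpace.single_apply, mul_ite]
    have h3 : g j ≤ ∑ l, g l * x l := by
      calc g j = ∑ l, g j * x l := by rw [← Finset.mul_sum, hsum, mul_one]
        _ ≤ ∑ l, g l * x l :=
          Finset.sum_le_sum fun l _ => mul_le_mul_of_nonneg_right (hjJ l) (hpos l)
    rw [h2] at h1
    calc x i ≤ eps * (g i - ∑ l, g l * x l) := h1
      _ ≤ eps * (g i - g j) := by
        apply mul_le_mul_of_nonneg_left _ heps.le
        linarith
  have hnormsq : ‖xt - x‖ ^ 2 = ∑ i, (xt i - x i) ^ 2 := by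
    rw [EuclideanSpace.norm_eq, Real.sq_sqrt (by positivity)]
    simp [Real.norm_eq_abs, sq_abs]
  have hjv : xt j = x j + ∑ h ∈ Ahat, x h := by rw [hxt]; simp
  have hjterm : (xt j - x j) ^ 2 = (∑ h ∈ Aplus, x h) ^ 2 := by
    rw [hjv, add_sub_cancel_left,
      Finset.sum_subset (hAplus ▸ Finset.filter_subset _ _) (fun h hh hnot => hzero h hh hnot)]
  have h4a : ∀ i ∈ Finset.univ.erase j, (xt i - x i) ^ 2 = if i ∈ Ahat then x i ^ 2 else 0 := by
    intro i hi
    have hij : i ≠ j := Finset.ne_of_mem_erase hi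
    rw [hxt]
    by_cases h : i ∈ Ahat <;> simp [hij, h]
  have h4 : ∑ i ∈ Finset.univ.erase j, (xt i - x i) ^ 2 ≤ ∑ i ∈ Aplus, x i ^ 2 := by
    rw [Finset.sum_congr rfl h4a]
    calc ∑ i ∈ Finset.univ.erase j, (if i ∈ Ahat then x i ^ 2 else 0)
        ≤ ∑ i : Fin n, (if i ∈ Ahat then x i ^ 2 else 0) :=
          Finset.sum_le_sum_of_subset_of_nonneg (Finset.erase_subset _ _)
            (fun i _ _ => by split <;> positivity)
      _ = ∑ i ∈ Ahat, x i ^ 2 := by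
          rw [Finset.sum_ite_mem, Finset.univ_inter]
      _ = ∑ i ∈ Aplus, x i ^ 2 := (Finset.sum_subset (hAplus ▸ Finset.filter_subset _ _)
          (fun h hh hnot => by rw [hzero h hh hnot]; ring)).symm
  have hsplit : ∑ i, (xt i - x i) ^ 2
      = (xt j - x j) ^ 2 + ∑ i ∈ Finset.univ.erase j, (xt i - x i) ^ 2 :=
    (Finset.add_sum_erase _ _ (Finset.mem_univ j)).symm
  have hS2 : (∑ h ∈ Aplus, x h) ^ 2 ≤ (Aplus.card : ℝ) * ∑ i ∈ Aplus, x i ^ 2 := by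
    exact_mod_cast sq_sum_le_card_mul_sum_sq (s := Aplus) (f := fun i => x i)
  have hPQ : ∑ i ∈ Aplus, x i ^ 2 ≤ eps * ∑ i ∈ Aplus, x i * (g i - g j) := by
    rw [Finset.mul_sum]
    apply Finset.sum_le_sum
    intro i hi
    have hx0 : 0 ≤ x i := hpos i
    have hk := hkey i (by rw [hAplus] at hi; exact (Finset.mem_filter.mp hi).1)
    nlinarith
  have hQ0 : 0 ≤ ∑ i ∈ Aplus, x i * (g i - g j) :=
    Finset.sum_nonneg fun i _ => mul_nonneg (hpos i) (by linarith [hjJ i])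
  have hc0 : (0:ℝ) ≤ (Aplus.card : ℝ) := Nat.cast_nonneg _
  rw [hnormsq, hsplit]
  nlinarith [hjterm, h4, hS2, hPQ, hQ0, hc0, heps.le,
    mul_le_mul_of_nonneg_left hPQ hc0]
end
end

section
/- Let S ⊆ ℝⁿ be a non-empty closed convex set, x ∈ S, g ∈ ℝⁿ and s > 0. Then ‖P_S(x − s g) − x‖ ≥ min{1, s} · ‖P_S(x − g) − x‖, where P_S denotes Euclidean projection onto S. -/
open scoped BigOperators

noncomputable section

open RealInnerProductSpace

private lemma proj_variational_ineq {n : ℕ} {S : Set (EuclideanSpace ℝ (Fin n))}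
    (hSconvex : Convex ℝ S) (y p : EuclideanSpace ℝ (Fin n)) (hpS : p ∈ S)
    (hmin : ∀ z ∈ S, ‖p - y‖ ≤ ‖z - y‖) : ∀ z ∈ S, ⟪y - p, z - p⟫ ≤ 0 := by
  haveI : Nonempty ↑S := ⟨⟨p, hpS⟩⟩
  have hbdd : BddBelow (Set.range fun w : S => ‖y - (w : EuclideanSpace ℝ (Fin n))‖) := by
    refine ⟨0, ?_⟩
    rintro r ⟨w, rfl⟩
    exact norm_nonneg _
  have hinf : ‖y - p‖ = ⨅ w : S, ‖y - (w : EuclideanSpace ℝ (Fin n))‖ := by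
    apply le_antisymm
    · exact le_ciInf fun w => by
        rw [norm_sub_rev y p, norm_sub_rev y (w : EuclideanSpace ℝ (Fin n))]
        exact hmin w w.2
    · exact ciInf_le hbdd ⟨p, hpS⟩
  exact (norm_eq_iInf_iff_real_inner_le_zero hSconvex hpS).mp hinf

set_option maxHeartbeats 1000000 in
/-- For a non-empty closed convex set `S`, `x ∈ S`, `g ∈ ℝⁿ` and `s > 0`,
`‖P_S(x - s g) - x‖ ≥ min{1, s} ‖P_S(x - g) - x‖`. -/
theorem projection_stepsize_lower_bound (n : ℕ)
    (S : Set (EuclideanSpace ℝ (Fin n)))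
    (hS : S.Nonempty) (hSclosed : IsClosed S) (hSconvex : Convex ℝ S)
    (x : EuclideanSpace ℝ (Fin n)) (hx : x ∈ S)
    (g : EuclideanSpace ℝ (Fin n)) (s : ℝ) (hs : 0 < s)
    -- `p₁ = P_S(x - s g)`:
    (p₁ : EuclideanSpace ℝ (Fin n)) (hp₁S : p₁ ∈ S)
    (hp₁ : ∀ z ∈ S, ‖p₁ - (x - s • g)‖ ≤ ‖z - (x - s • g)‖)
    -- `p₂ = P_S(x - g)`:
    (p₂ : EuclideanSpace ℝ (Fin n)) (hp₂S : p₂ ∈ S)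
    (hp₂ : ∀ z ∈ S, ‖p₂ - (x - g)‖ ≤ ‖z - (x - g)‖) :
    min 1 s * ‖p₂ - x‖ ≤ ‖p₁ - x‖ := by
  have h1 := proj_variational_ineq hSconvex (x - s • g) p₁ hp₁S hp₁ p₂ hp₂S
  have h2 := proj_variational_ineq hSconvex (x - g) p₂ hp₂S hp₂ p₁ hp₁S
  have e1 : x - s • g - p₁ = -(s • g) - (p₁ - x) := by module
  have e2 : p₂ - p₁ = (p₂ - x) - (p₁ - x) := by module
  have e3 : x - g - p₂ = -g - (p₂ - x) := by module
  have e4 : p₁ - p₂ = (p₁ - x) - (p₂ - x) := by module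
  rw [e1, e2] at h1
  rw [e3, e4] at h2
  set a := p₁ - x with ha'
  set b := p₂ - x with hb'
  simp only [inner_sub_left, inner_sub_right, inner_neg_left, real_inner_smul_left] at h1 h2
  have cab : ⟪a, b⟫ ≤ ‖a‖ * ‖b‖ := real_inner_le_norm a b
  have haa : ⟪a, a⟫ = ‖a‖ ^ 2 := real_inner_self_eq_norm_sq a
  have hbb : ⟪b, b⟫ = ‖b‖ ^ 2 := real_inner_self_eq_norm_sq b
  have hsym : ⟪a, b⟫ = ⟪b, a⟫ := real_inner_comm b a
  have hcomb : ‖a‖ ^ 2 + s * ‖b‖ ^ 2 ≤ (1 + s) * ⟪a, b⟫ := by nlinarith [h1, h2]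
  have hna : (0:ℝ) ≤ ‖a‖ := norm_nonneg a
  have hnb : (0:ℝ) ≤ ‖b‖ := norm_nonneg b
  have hkey : ‖a‖ ^ 2 + s * ‖b‖ ^ 2 ≤ (1 + s) * (‖a‖ * ‖b‖) := by
    nlinarith [mul_nonneg (by linarith : (0:ℝ) ≤ 1 + s) (sub_nonneg.mpr cab)]
  rcases le_total s 1 with h | h
  · rw [min_eq_right h]
    nlinarith [hkey, mul_nonneg (by linarith : (0:ℝ) ≤ 1 - s) hnb]
  · rw [min_eq_left h]
    nlinarith [hkey, mul_nonneg (by linarith : (0:ℝ) ≤ s - 1) hnb]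
end
end
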